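/- arXiv:2503.10161 — 4 statements merged into one kernel-verified Lean document; each statement's English description precedes it below -/
import Mathlib

section
/- A function f from a finite set S to [n], where |S| = n, is a bijection if and only if for every i in [n], the number of preimages |f^{-1}(i)| is odd. -/
theorem stmt_0 {S : Type*} [Fintype S] [DecidableEq S] {n : ℕ}
    (hcard : Fintype.card S = n) (f : S → Fin n) :
    Function.Bijective f ↔
      ∀ i : Fin n, Odd (Finset.univ.filter (fun a => f a = i)).card := by
  have hsum : ∑ i : Fin n, (Finset.univ.filter (fun a => f a = i)).card = n := by
    rw [← Finset.card_eq_sum_card_fiberwise (fun x _ => Finset.mem_univ (f x))]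
    simpa using hcard
  constructor
  · intro hf i
    have h1 : (Finset.univ.filter (fun a => f a = i)).card = 1 := by
      rw [Finset.card_eq_one]
      obtain ⟨a, ha, hu⟩ := hf.existsUnique i
      refine ⟨a, ?_⟩
      ext b
      simp only [Finset.mem_filter, Finset.mem_univ, true_and, Finset.mem_singleton]
      exact ⟨fun hb => hu b hb, fun hb => hb ▸ ha⟩
    simp [h1]
  · intro h
    have hge : ∀ i ∈ Finset.univ, 1 ≤ (Finset.univ.filter (fun a => f a = i)).card :=
      fun i _ => (h i).pos
    have heq : ∀ i ∈ (Finset.univ : Finset (Fin n)), 1 =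
        (Finset.univ.filter (fun a => f a = i)).card := by
      rw [← Finset.sum_eq_sum_iff_of_le hge]
      simp [hsum]
    have hinj : Function.Injective f := by
      intro a b hab
      have ha : a ∈ Finset.univ.filter (fun x => f x = f b) := by simp [hab]
      have hb : b ∈ Finset.univ.filter (fun x => f x = f b) := by simp
      have := (heq (f b) (Finset.mem_univ _)).symm
      exact Finset.card_le_one.mp this.le a ha b hb
    rw [Fintype.bijective_iff_injective_and_card]
    exact ⟨hinj, by simp [hcard]⟩
end

section
/- The number of functions r : [n] → [n] whose functional graph has exactly i nodes lying on cycles equals i · n^(n-1-i) · n! / (n-i)!. -/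
/-!
The periodic points `C` of `r : [n] → [n]` are permuted by `r`, and every other point flows into
`C`; so `r` is a permutation of `C` together with a rooted forest on `[n]` whose roots are the
points of `C` (the parent of a non-root `v` being `r v`). There are `n.choose i` choices of `C` and
`i!` permutations, and forests on `a + b` vertices with `b` prescribed roots number
`b (a + b)^(a - 1)`. That last count is proved by induction: classify a forest by the set `S` of
vertices whose parent is a root; removing the roots leaves a forest on `a` vertices rooted at `S`,
and the resulting recursion is the binomial identity `∑ₜ C(a,t) t xᵗ aᵃ⁻ᵗ = a x (x + a)ᵃ⁻¹`.
-/

open Finset Function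

theorem Nat.card_subtype_eq_sum_card_fiberwise {α β : Type*} [Fintype α] [DecidableEq β]
    {P : α → Prop} (f : α → β) {t : Finset β} (hf : ∀ a, P a → f a ∈ t) :
    Nat.card {a // P a} = ∑ b ∈ t, Nat.card {a // P a ∧ f a = b} := by
  classical
  simp only [Nat.card_eq_fintype_card, Fintype.card_subtype]
  rw [card_eq_sum_card_fiberwise (t := t) fun a ha => hf a (by simpa using ha)]
  simp only [filter_filter]

theorem sum_range_choose_mul_mul_pow_mul_pow {R : Type*} [CommSemiring R] (x y : R) (a : ℕ) :
    ∑ t ∈ range (a + 1), (a.choose t * t : R) * x ^ t * y ^ (a - t) =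
      a * x * (x + y) ^ (a - 1) := by
  cases a with
  | zero => simp
  | succ b =>
    rw [sum_range_succ', Nat.add_sub_cancel, add_pow, mul_sum]
    simp only [Nat.cast_zero, mul_zero, zero_mul, add_zero]
    refine sum_congr rfl fun u hu => ?_
    have hchoose : ((b + 1).choose (u + 1) * (u + 1) : R) = (b + 1) * b.choose u := by
      simpa using congrArg (Nat.cast : ℕ → R) (Nat.add_one_mul_choose_eq b u).symm
    rw [Nat.cast_add_one, hchoose, show b + 1 - (u + 1) = b - u by omega, pow_succ]
    push_cast
    ring

variable {V : Type*}

theorem Function.exists_iterate_mem_of_eqOn_compl {p q : V → V} {T : Set V}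
    (h : ∀ v ∉ T, p v = q v) {v : V} {m : ℕ} (hm : p^[m] v ∈ T) : ∃ k, q^[k] v ∈ T := by
  induction m generalizing v with
  | zero => exact ⟨0, hm⟩
  | succ m ih =>
    by_cases hv : v ∈ T
    · exact ⟨0, hv⟩
    rw [iterate_succ_apply, h v hv] at hm
    obtain ⟨k, hk⟩ := ih hm
    exact ⟨k + 1, hk⟩

theorem Function.exists_iterate_mem_periodicPts [Finite V] (f : V → V) (v : V) :
    ∃ m, f^[m] v ∈ periodicPts f := by
  obtain ⟨a, b, hab, heq⟩ := Finite.exists_ne_map_eq_of_infinite (fun k : ℕ => f^[k] v)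
  wlog h : a < b generalizing a b
  · exact this b a hab.symm heq.symm (by omega)
  refine ⟨a, mk_mem_periodicPts (n := b - a) (by omega) ?_⟩
  rw [IsPeriodicPt, IsFixedPt, ← iterate_add_apply, Nat.sub_add_cancel h.le]
  exact heq.symm

theorem Set.MapsTo.mem_of_iterate_mem {f : V → V} {C : Set V} (hC : Set.MapsTo f C C)
    {v : V} (hv : v ∈ periodicPts f) {k : ℕ} (hk : f^[k] v ∈ C) : v ∈ C := by
  obtain ⟨n, hn, hper⟩ := hv
  have hle : k ≤ n * (k + 1) := by nlinarith
  rw [← (hper.mul_const (k + 1)).eq, ← Nat.sub_add_cancel hle, iterate_add_apply]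
  exact hC.iterate _ hk

theorem Set.MapsTo.subset_periodicPts {f : V → V} {C : Set V} [Finite C] (hC : Set.MapsTo f C C)
    (hinj : Set.InjOn f C) : C ⊆ periodicPts f := fun v hv =>
  (show Semiconj Subtype.val (hC.restrict f C C) f from fun _ => rfl).mapsTo_periodicPts
    ((hC.restrict_inj.2 hinj).mem_periodicPts ⟨v, hv⟩)

theorem card_injective_fun_into_self (C : Finset V) :
    Nat.card {g : C → V // (∀ z, g z ∈ C) ∧ Injective g} = C.card.factorial := by
  rw [Nat.card_congr (β := C ↪ C)
    { toFun g := ⟨fun z => ⟨g.1 z, g.2.1 z⟩, fun a b h => g.2.2 (congrArg Subtype.val h)⟩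
      invFun e := ⟨fun z => e z, fun z => (e z).2, fun a b h => e.injective (Subtype.ext h)⟩ },
    Nat.card_eq_fintype_card, Fintype.card_embedding_eq, Fintype.card_coe, Nat.descFactorial_self]

variable [DecidableEq V]

theorem Nat.card_subtype_eq_card_mul_card_of_split (S : Finset V) {P : (V → V) → Prop}
    {G : (S → V) → Prop} {H : (V → V) → Prop} (hH : ∀ q, H q → ∀ v ∈ S, q v = v)
    (hP : ∀ p, P p ↔ G (S.restrict p) ∧ H (S.piecewise id p)) :
    Nat.card {p // P p} = Nat.card {g // G g} * Nat.card {q // H q} := by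
  let glue (g : S → V) (q : V → V) : V → V := fun v => if h : v ∈ S then g ⟨v, h⟩ else q v
  have restrict_glue (g : S → V) (q : V → V) : S.restrict (glue g q) = g := by
    funext z; simp [glue, z.2]
  have piecewise_glue (g : S → V) (q : {q // H q}) : S.piecewise id (glue g q) = q := by
    funext v; by_cases hv : v ∈ S <;> simp [glue, hv, hH q.1 q.2 v]
  rw [← Nat.card_prod]
  exact Nat.card_congr
    { toFun p := (⟨_, ((hP p).1 p.2).1⟩, ⟨_, ((hP p).1 p.2).2⟩)
      invFun x := ⟨glue x.1 x.2,
        (hP _).2 (by rw [restrict_glue, piecewise_glue]; exact ⟨x.1.2, x.2.2⟩)⟩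
      left_inv p := by ext v; by_cases hv : v ∈ S <;> simp [glue, hv]
      right_inv x := by ext1 <;> ext1 <;> simp only [restrict_glue, piecewise_glue] }

namespace FunctionalGraph

/-- For disjoint `A` and `R`: the parent maps of the forests on `A ∪ R` whose roots are exactly the
points of `R`, extended by the identity outside `A`. -/
def forests (A R : Finset V) : Set (V → V) :=
  {p | (∀ v ∉ A, p v = v) ∧ (∀ v ∈ A, p v ∈ A ∪ R) ∧ ∀ v ∈ A, ∃ m, p^[m] v ∈ R}

theorem forests_empty_left (R : Finset V) : forests ∅ R = {id} := by
  ext p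
  simp [forests, funext_iff]

theorem forests_empty_right {A : Finset V} (hA : A.Nonempty) : forests A ∅ = ∅ := by
  obtain ⟨v, hv⟩ := hA
  exact Set.eq_empty_of_forall_notMem fun p hp => by simpa using hp.2.2 v hv

theorem exists_iterate_mem_filter {p : V → V} {A R : Finset V} (hd : Disjoint A R)
    (hA : ∀ v ∈ A, p v ∈ A ∪ R) {v : V} (hv : v ∈ A) {m : ℕ} (hm : p^[m] v ∈ R) :
    ∃ k, p^[k] v ∈ A.filter (p · ∈ R) := by
  induction m generalizing v with
  | zero => exact absurd hm (disjoint_left.1 hd hv)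
  | succ m ih =>
    by_cases hpv : p v ∈ R
    · exact ⟨0, mem_filter.2 ⟨hv, hpv⟩⟩
    have hpvA : p v ∈ A := by simpa [hpv] using hA v hv
    obtain ⟨k, hk⟩ := ih hpvA hm
    exact ⟨k + 1, hk⟩

theorem mem_forests_and_filter_eq_iff {A R S : Finset V} (hd : Disjoint A R) (hS : S ⊆ A)
    (p : V → V) :
    p ∈ forests A R ∧ A.filter (p · ∈ R) = S ↔
      (∀ z : S, S.restrict p z ∈ R) ∧ S.piecewise id p ∈ forests (A \ S) S := by
  have hAS : A \ S ∪ S = A := sdiff_union_of_subset hS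
  have agree : ∀ v ∉ (S : Set V), S.piecewise id p v = p v :=
    fun v hv => piecewise_eq_of_notMem _ _ _ hv
  constructor
  · rintro ⟨⟨hfix, hmaps, hreach⟩, rfl⟩
    refine ⟨fun z => (mem_filter.1 z.2).2, ?_, ?_, ?_⟩
    · intro v hv
      by_cases hvS : v ∈ A.filter (p · ∈ R)
      · simp [hvS]
      · rw [agree v hvS]
        exact hfix v (by simp_all)
    · intro v hv
      rw [mem_sdiff] at hv
      rw [agree v hv.2, hAS]
      have := hmaps v hv.1
      simp_all
    · intro v hv
      obtain ⟨m, hm⟩ := hreach v (mem_sdiff.1 hv).1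
      obtain ⟨k, hk⟩ := exists_iterate_mem_filter hd hmaps (mem_sdiff.1 hv).1 hm
      exact exists_iterate_mem_of_eqOn_compl (fun w hw => (agree w hw).symm) (mem_coe.2 hk)
  · rintro ⟨hSR, hfix, hmaps, hreach⟩
    rw [hAS] at hmaps
    have hpA : ∀ v ∈ A, v ∉ S → p v ∈ A := fun v hv hvS => by
      rw [← agree v hvS]; exact hmaps v (mem_sdiff.2 ⟨hv, hvS⟩)
    refine ⟨⟨fun v hv => ?_, fun v hv => ?_, fun v hv => ?_⟩, ?_⟩
    · have hvS : v ∉ S := fun h => hv (hS h)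
      rw [← agree v hvS]
      exact hfix v (by simp [hv])
    · by_cases hvS : v ∈ S
      · exact mem_union_right _ (hSR ⟨v, hvS⟩)
      · exact mem_union_left _ (hpA v hv hvS)
    · obtain ⟨m, hm⟩ : ∃ m, (S.piecewise id p)^[m] v ∈ S := by
        by_cases hvS : v ∈ S
        · exact ⟨0, hvS⟩
        · exact hreach v (mem_sdiff.2 ⟨hv, hvS⟩)
      obtain ⟨k, hk⟩ := exists_iterate_mem_of_eqOn_compl agree (mem_coe.2 hm)
      exact ⟨k + 1, by rw [iterate_succ_apply']; exact hSR ⟨_, hk⟩⟩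
    · ext v
      simp only [mem_filter]
      constructor
      · rintro ⟨hv, hpv⟩
        by_contra hvS
        exact disjoint_left.1 hd (hpA v hv hvS) hpv
      · exact fun hv => ⟨hS hv, hSR ⟨v, hv⟩⟩

theorem card_forests_eq_sum [Fintype V] {A R : Finset V} (hd : Disjoint A R) :
    Nat.card (forests A R) =
      ∑ S ∈ A.powerset, R.card ^ S.card * Nat.card (forests (A \ S) S) := by
  rw [Nat.card_subtype_eq_sum_card_fiberwise (fun p => A.filter (p · ∈ R))
    fun p _ => mem_powerset.2 (filter_subset _ _)]
  refine sum_congr rfl fun S hS => ?_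
  rw [Nat.card_subtype_eq_card_mul_card_of_split S (G := fun g => ∀ z, g z ∈ R)
    (fun q (hq : q ∈ forests (A \ S) S) v hv => hq.1 v (by simp [hv]))
    (mem_forests_and_filter_eq_iff hd (mem_powerset.1 hS)),
    Nat.card_congr (Equiv.subtypePiEquivPi), Nat.card_fun]
  simp

/-- Cayley's count `r (a + r)^(a - 1)` of forests on `a + r` vertices with `r` given roots,
multiplied by `a + r` so that it also holds for `a = 0`. -/
theorem card_add_card_mul_card_forests [Fintype V] {A R : Finset V} (hd : Disjoint A R) :
    (A.card + R.card) * Nat.card (forests A R) = R.card * (A.card + R.card) ^ A.card := by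
  induction hA : A.card using Nat.strong_induction_on generalizing A R with
  | _ a ih =>
  obtain rfl | hne := A.eq_empty_or_nonempty
  · subst hA
    simp [forests_empty_left]
  have ha : 0 < a := hA ▸ hne.card_pos
  have hsummand : ∀ S ∈ A.powerset,
      a * Nat.card (forests (A \ S) S) = S.card * a ^ (a - S.card) := by
    intro S hS
    obtain rfl | hSne := S.eq_empty_or_nonempty
    · simp [forests_empty_right hne]
    have hcard : (A \ S).card + S.card = a := by
      rw [card_sdiff_of_subset (mem_powerset.1 hS),
        Nat.sub_add_cancel (card_le_card (mem_powerset.1 hS)), hA]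
    have := ih (A \ S).card (by have := hSne.card_pos; omega) sdiff_disjoint rfl
    rwa [hcard, show (A \ S).card = a - S.card by omega] at this
  have key : a * Nat.card (forests A R) = a * (R.card * (R.card + a) ^ (a - 1)) := by
    calc a * Nat.card (forests A R)
        = ∑ S ∈ A.powerset, R.card ^ S.card * (a * Nat.card (forests (A \ S) S)) := by
          rw [card_forests_eq_sum hd, mul_sum]
          exact sum_congr rfl fun S _ => mul_left_comm _ _ _
      _ = ∑ S ∈ A.powerset, R.card ^ S.card * (S.card * a ^ (a - S.card)) :=
          sum_congr rfl fun S hS => by rw [hsummand S hS]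
      _ = ∑ t ∈ range (a + 1), (a.choose t * t) * R.card ^ t * a ^ (a - t) := by
          rw [sum_powerset_apply_card (fun t => R.card ^ t * (t * a ^ (a - t))), hA]
          exact sum_congr rfl fun t _ => by simp only [smul_eq_mul]; ring
      _ = a * (R.card * (R.card + a) ^ (a - 1)) := by
          rw [← mul_assoc]; exact_mod_cast sum_range_choose_mul_mul_pow_mul_pow R.card a a
  obtain ⟨b, rfl⟩ := Nat.exists_eq_add_one_of_ne_zero ha.ne'
  rw [Nat.eq_of_mul_eq_mul_left ha key, Nat.add_sub_cancel]
  ring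

theorem periodicPts_eq_coe_iff [Fintype V] (C : Finset V) (f : V → V) :
    periodicPts f = C ↔
      ((∀ z : C, C.restrict f z ∈ C) ∧ Injective (C.restrict f)) ∧
        C.piecewise id f ∈ forests Cᶜ C := by
  have agree : ∀ v ∉ (C : Set V), C.piecewise id f v = f v :=
    fun v hv => piecewise_eq_of_notMem _ _ _ hv
  constructor
  · intro h
    have hbij := bijOn_periodicPts f
    rw [h] at hbij
    refine ⟨⟨fun z => hbij.mapsTo z.2, hbij.injOn.injective⟩, fun v hv => ?_, fun v _ => ?_,
      fun v hv => ?_⟩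
    · simp [not_not.1 (mem_compl.not.1 hv)]
    · simpa using (em _).symm
    · obtain ⟨m, hm⟩ := exists_iterate_mem_periodicPts f v
      rw [h] at hm
      exact exists_iterate_mem_of_eqOn_compl (fun w hw => (agree w hw).symm) hm
  · rintro ⟨⟨hmaps, hinj⟩, -, -, hreach⟩
    have hC : Set.MapsTo f C C := fun v hv => hmaps ⟨v, hv⟩
    refine Set.Subset.antisymm (fun v hv => ?_) (hC.subset_periodicPts ?_)
    · by_contra hvC
      obtain ⟨m, hm⟩ := hreach v (mem_compl.2 hvC)
      obtain ⟨k, hk⟩ := exists_iterate_mem_of_eqOn_compl agree (mem_coe.2 hm)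
      exact hvC (hC.mem_of_iterate_mem hv hk)
    · exact fun v hv w hw h => congrArg Subtype.val (@hinj ⟨v, hv⟩ ⟨w, hw⟩ h)

theorem card_periodicPts_eq [Fintype V] (C : Finset V) :
    Nat.card {f : V → V // periodicPts f = C} = C.card.factorial * Nat.card (forests Cᶜ C) := by
  rw [Nat.card_subtype_eq_card_mul_card_of_split C (G := fun g => (∀ z, g z ∈ C) ∧ Injective g)
    (fun q (hq : q ∈ forests Cᶜ C) v hv => hq.1 v (by simpa using hv)) (periodicPts_eq_coe_iff C),
    card_injective_fun_into_self]

theorem card_mul_card_periodicPts_eq [Fintype V] (C : Finset V) :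
    Fintype.card V * Nat.card {f : V → V // periodicPts f = C} =
      C.card.factorial * (C.card * Fintype.card V ^ (Fintype.card V - C.card)) := by
  have h := card_add_card_mul_card_forests (disjoint_compl_left (a := C))
  rw [card_compl_add_card, card_compl] at h
  rw [card_periodicPts_eq, mul_left_comm, h]

theorem card_mul_card_ncard_periodicPts_eq [Fintype V] (i : ℕ) :
    Fintype.card V * Nat.card {f : V → V // (periodicPts f).ncard = i} =
      (Fintype.card V).choose i * (i.factorial * (i * Fintype.card V ^ (Fintype.card V - i))) := by
  classical
  rw [Nat.card_subtype_eq_sum_card_fiberwise (fun f => (periodicPts f).toFinset)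
    (t := powersetCard i univ) fun f hf => by simpa [Set.ncard_eq_toFinset_card'] using hf, mul_sum]
  have hfiber : ∀ C ∈ powersetCard i univ,
      Nat.card {f : V → V // (periodicPts f).ncard = i ∧ (periodicPts f).toFinset = C} =
        Nat.card {f : V → V // periodicPts f = C} := by
    intro C hC
    refine Nat.card_congr (Equiv.subtypeEquivRight fun f => ?_)
    rw [← coe_inj, Set.coe_toFinset, and_iff_right_of_imp fun h => by
      rw [h, Set.ncard_coe_finset, (mem_powersetCard.1 hC).2]]
  rw [sum_congr rfl fun C hC => by
      rw [hfiber C hC, card_mul_card_periodicPts_eq, (mem_powersetCard.1 hC).2],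
    sum_const, card_powersetCard, card_univ, smul_eq_mul]

end FunctionalGraph

theorem stmt_4 (n i : ℕ) (hi : 1 ≤ i) (hin : i ≤ n) :
    (Nat.card {r : Fin n → Fin n //
        Nat.card {v : Fin n // ∃ m > 0, r^[m] v = v} = i} : ℚ) =
      (i : ℚ) * (n : ℚ) ^ ((n : ℤ) - 1 - (i : ℤ)) * (Nat.factorial n : ℚ) /
        (Nat.factorial (n - i) : ℚ) := by
  have hcount : (n * Nat.card {r : Fin n → Fin n //
      Nat.card {v : Fin n // ∃ m > 0, r^[m] v = v} = i} : ℚ) =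
        n.choose i * (i.factorial * (i * n ^ (n - i))) := by
    exact_mod_cast Fintype.card_fin n ▸
      FunctionalGraph.card_mul_card_ncard_periodicPts_eq (V := Fin n) i
  have hn : (n : ℚ) ≠ 0 := by norm_cast; omega
  have hpow : (n : ℚ) ^ ((n : ℤ) - 1 - i) = n ^ (n - i) / n := by
    rw [show (n : ℤ) - 1 - i = ((n - i : ℕ) : ℤ) - 1 by omega, zpow_sub_one₀ hn, zpow_natCast,
      div_eq_mul_inv]
  have hfact : (n.choose i * i.factorial * (n - i).factorial : ℚ) = n.factorial := by
    exact_mod_cast Nat.choose_mul_factorial_mul_factorial hin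
  rw [hpow, ← hfact]
  field_simp
  linear_combination hcount
end

section
/- The number of labeled forests on vertex set [n] consisting of i trees such that nodes 1, 2, ..., i belong to distinct trees equals i · n^(n-i-1). -/
/-!
Call `G` a forest rooted at `R` if it is acyclic and each of its trees contains exactly one vertex
of `R`; let `f (n, i)` count those on `n` labelled vertices with a fixed set of `i` roots. Deleting
a root `r` leaves a forest on the other `n - 1` vertices rooted at the remaining roots together
with the neighbours `S` of `r`, which are not roots; conversely `r` may be reattached to any set
`S` of non-roots. With `k + 1` roots and `m` non-roots this gives
`f (m + k + 1, k + 1) = ∑ⱼ C(m, j) f (m + k, k + j)`, and `f (n, i) = i n ^ (n - i - 1)` follows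
by induction on `n` from the Abel-type identity
`∑ⱼ C(m, j) (k + j) (m + k) ^ (m - j - 1) = (k + 1) (m + k + 1) ^ (m - 1)`.
-/

open Finset

lemma sum_range_choose_mul_pow {R : Type*} [CommSemiring R] (m : ℕ) (x : R) :
    ∑ j ∈ range (m + 1), (m.choose j : R) * x ^ (m - j) = (x + 1) ^ m := by
  rw [add_comm x, add_pow]
  simp only [one_pow, one_mul, mul_comm (x ^ _)]

lemma mul_sum_range_mul_choose_mul_pow {R : Type*} [CommSemiring R] (m : ℕ) (x : R) :
    (x + 1) * ∑ j ∈ range (m + 1), (j * m.choose j : R) * x ^ (m - j) = m * (x + 1) ^ m := by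
  cases m with
  | zero => simp
  | succ m =>
    have hshift : ∀ j ∈ range (m + 1),
        ((j + 1 : ℕ) * (m + 1).choose (j + 1) : R) * x ^ (m + 1 - (j + 1)) =
          (m + 1) * (m.choose j * x ^ (m - j)) := by
      intro j _
      have := Nat.add_one_mul_choose_eq m j
      rw [Nat.add_sub_add_right, ← mul_assoc, mul_comm _ ((m + 1).choose (j + 1) : R)]
      exact_mod_cast congrArg (fun n : ℕ => (n : R) * x ^ (m - j)) this.symm
    rw [sum_range_succ', sum_congr rfl hshift, ← mul_sum, sum_range_choose_mul_pow]
    push_cast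
    ring

lemma sum_range_choose_mul_add_mul_zpow {K : Type*} [Field K] (m k : ℕ) (hx : (m + k : K) ≠ 0)
    (hx1 : (m + k + 1 : K) ≠ 0) :
    ∑ j ∈ range (m + 1), (m.choose j : K) * ((k + j) * (m + k) ^ ((m : ℤ) - j - 1)) =
      (k + 1) * (m + k + 1) ^ ((m : ℤ) - 1) := by
  set x : K := m + k
  have hpow : ∀ j ∈ range (m + 1), (m.choose j : K) * ((k + j) * x ^ ((m : ℤ) - j - 1)) * x =
      k * (m.choose j * x ^ (m - j)) + (j * m.choose j) * x ^ (m - j) := by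
    intro j hj
    rw [show ((m : ℤ) - j - 1) = ((m - j : ℕ) : ℤ) - 1 by
      rw [Nat.cast_sub (mem_range_succ_iff.mp hj)], zpow_sub_one₀ hx, zpow_natCast]
    field_simp
  apply mul_right_cancel₀ (mul_ne_zero hx hx1)
  rw [← mul_assoc, sum_mul, sum_congr rfl hpow, sum_add_distrib, ← mul_sum,
    sum_range_choose_mul_pow, zpow_sub_one₀ hx1, zpow_natCast]
  field_simp
  linear_combination (mul_sum_range_mul_choose_mul_pow m x)

lemma sum_powerset_add_card_mul_zpow {α K : Type*} [Field K] (T : Finset α) (k : ℕ)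
    (hx : (#T + k : K) ≠ 0) (hx1 : (#T + k + 1 : K) ≠ 0) :
    ∑ S ∈ T.powerset, ((k : K) + #S) * ((#T : K) + k) ^ ((#T : ℤ) - #S - 1) =
      (k + 1) * (#T + k + 1) ^ ((#T : ℤ) - 1) := by
  rw [sum_powerset_apply_card fun j : ℕ => ((k : K) + j) * ((#T : K) + k) ^ ((#T : ℤ) - j - 1)]
  simp only [nsmul_eq_mul]
  exact sum_range_choose_mul_add_mul_zpow _ _ hx hx1

lemma card_subtype_mem_compl_singleton_add_one {V : Type*} [DecidableEq V] {R : Finset V} {r : V}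
    (hr : r ∈ R) : #(R.subtype (· ∈ ({r}ᶜ : Set V))) + 1 = #R := by
  simp [card_subtype, filter_ne', card_erase_add_one hr]

namespace SimpleGraph

variable {V : Type*}

def IsRootedForest (G : SimpleGraph V) (R : Finset V) : Prop :=
  G.IsAcyclic ∧ (∀ v, ∃ ρ ∈ R, G.Reachable ρ v) ∧ ∀ ρ ∈ R, ∀ σ ∈ R, G.Reachable ρ σ → ρ = σ

def insertVertex (r : V) (G' : SimpleGraph ({r}ᶜ : Set V)) (S : Finset ({r}ᶜ : Set V)) :
    SimpleGraph V where
  Adj x y := (∃ (hx : x ≠ r) (hy : y ≠ r), G'.Adj ⟨x, hx⟩ ⟨y, hy⟩) ∨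
    (x = r ∧ ∃ hy : y ≠ r, ⟨y, hy⟩ ∈ S) ∨ (y = r ∧ ∃ hx : x ≠ r, ⟨x, hx⟩ ∈ S)
  symm := ⟨fun x y => by
    rintro (⟨hx, hy, h⟩ | h | h)
    exacts [.inl ⟨hy, hx, h.symm⟩, .inr (.inr h), .inr (.inl h)]⟩
  loopless := ⟨fun x => by
    rintro (⟨_, _, h⟩ | ⟨rfl, h, -⟩ | ⟨rfl, h, -⟩)
    exacts [G'.loopless.irrefl _ h, h rfl, h rfl]⟩

section insertVertex

variable {r : V} {G' : SimpleGraph ({r}ᶜ : Set V)} {S : Finset ({r}ᶜ : Set V)}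

@[simp]
lemma insertVertex_adj_coe {x y : ({r}ᶜ : Set V)} :
    (insertVertex r G' S).Adj x y ↔ G'.Adj x y := by
  obtain ⟨x, hx : x ≠ r⟩ := x
  obtain ⟨y, hy : y ≠ r⟩ := y
  simp [insertVertex, hx, hy]

@[simp]
lemma insertVertex_adj_self {y : ({r}ᶜ : Set V)} :
    (insertVertex r G' S).Adj r y ↔ y ∈ S := by
  obtain ⟨y, hy : y ≠ r⟩ := y
  simp [insertVertex, hy]

lemma induce_insertVertex : (insertVertex r G' S).induce {r}ᶜ = G' := by
  ext x y
  simp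

lemma insertVertex_induce {G : SimpleGraph V} (hS : ∀ s, s ∈ S ↔ G.Adj r s) :
    insertVertex r (G.induce {r}ᶜ) S = G := by
  ext x y
  rcases eq_or_ne x r with rfl | hx
  · rcases eq_or_ne y x with rfl | hy
    · simp
    · exact (insertVertex_adj_self (y := ⟨y, hy⟩)).trans (hS _)
  rcases eq_or_ne y r with rfl | hy
  · rw [adj_comm, G.adj_comm]
    exact (insertVertex_adj_self (y := ⟨x, hx⟩)).trans (hS _)
  · exact insertVertex_adj_coe (x := ⟨x, hx⟩) (y := ⟨y, hy⟩)

lemma reachable_insertVertex_of_reachable {x y : ({r}ᶜ : Set V)} (h : G'.Reachable x y) :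
    (insertVertex r G' S).Reachable x y :=
  h.map ⟨Subtype.val, insertVertex_adj_coe.mpr⟩

lemma reachable_of_walk_insertVertex {x y : ({r}ᶜ : Set V)} (w : (insertVertex r G' S).Walk x y)
    (hw : r ∉ w.support) : G'.Reachable x y := by
  have : ((insertVertex r G' S).induce {r}ᶜ).Reachable x y :=
    ⟨w.induce {r}ᶜ fun z hz => Set.mem_compl_singleton_iff.mpr (ne_of_mem_of_not_mem hz hw)⟩
  rwa [induce_insertVertex] at this

lemma exists_reachable_of_walk_insertVertex {u v : V} (w : (insertVertex r G' S).Walk u v)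
    (hv : v ≠ r) :
    (∃ hu : u ≠ r, G'.Reachable ⟨u, hu⟩ ⟨v, hv⟩) ∨ ∃ s ∈ S, G'.Reachable s ⟨v, hv⟩ := by
  induction w with
  | nil => exact .inl ⟨hv, .rfl⟩
  | @cons u w v h p ih =>
    rcases ih hv with ⟨hw, hwv⟩ | hS
    · rcases eq_or_ne u r with rfl | hu
      · exact .inr ⟨⟨w, hw⟩, insertVertex_adj_self.mp h, hwv⟩
      · have : G'.Adj ⟨u, hu⟩ ⟨w, hw⟩ := insertVertex_adj_coe.mp h
        exact .inl ⟨hu, this.reachable.trans hwv⟩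
    · exact .inr hS

lemma reachable_insertVertex_self_iff {x : ({r}ᶜ : Set V)} :
    (insertVertex r G' S).Reachable r x ↔ ∃ s ∈ S, G'.Reachable s x := by
  refine ⟨fun ⟨w⟩ => ?_, fun ⟨s, hs, h⟩ => ?_⟩
  · simpa using exists_reachable_of_walk_insertVertex w x.2
  · exact (insertVertex_adj_self.mpr hs).reachable.trans (reachable_insertVertex_of_reachable h)

lemma reachable_insertVertex_iff {x y : ({r}ᶜ : Set V)} :
    (insertVertex r G' S).Reachable x y ↔ G'.Reachable x y ∨
      (insertVertex r G' S).Reachable r x ∧ (insertVertex r G' S).Reachable r y := by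
  refine ⟨fun hxy => ?_, ?_⟩
  · rcases exists_reachable_of_walk_insertVertex hxy.some y.2 with ⟨_, h⟩ | h
    · exact .inl h
    · have hry := reachable_insertVertex_self_iff.mpr h
      exact .inr ⟨hry.trans hxy.symm, hry⟩
  · rintro (h | ⟨hx, hy⟩)
    exacts [reachable_insertVertex_of_reachable h, hx.symm.trans hy]

lemma isAcyclic_insertVertex_iff :
    (insertVertex r G' S).IsAcyclic ↔
      G'.IsAcyclic ∧ ∀ s ∈ S, ∀ t ∈ S, G'.Reachable s t → s = t := by
  constructor
  · intro h
    classical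
    refine ⟨by simpa only [induce_insertVertex] using h.induce {r}ᶜ, fun s hs t ht hst => ?_⟩
    -- `r` followed by an `s`-`t` path of `G'` is a path through the neighbour `t` of `r`,
    -- so by acyclicity its second vertex `s` is `t`.
    let f : G' →g insertVertex r G' S := ⟨Subtype.val, insertVertex_adj_coe.mpr⟩
    let q : G'.Path s t := hst.some.toPath
    have hq : (q.1.map f).IsPath := q.2.map Subtype.val_injective
    have hr : r ∉ (q.1.map f).support := by simp [f, Walk.support_map]
    have := h.eq_snd_of_adj_start (hq.cons hr (h := insertVertex_adj_self.mpr hs))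
      (insertVertex_adj_self.mpr ht) (Walk.end_mem_support _)
    exact Subtype.ext (by simpa [f] using this.symm)
  · rintro ⟨hG', hS⟩ v c hc
    classical
    by_cases hr : r ∈ c.support
    · -- A cycle through `r` leaves it towards `y` and returns from some `z ≠ y`; in between it
      -- joins `z` and `y` inside `G'`.
      have hd := hc.rotate hr
      generalize c.rotate r hr = d at hd
      cases d with
      | nil => exact hd.ne_nil rfl
      | @cons _ y _ hry q =>
        rw [Walk.cons_isCycle_iff] at hd
        obtain ⟨z, hrz, q', hq'⟩ := Walk.exists_eq_cons_of_ne hry.ne q.reverse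
        have hpath : (Walk.cons hrz q').IsPath := hq' ▸ hd.1.reverse
        have hzy : z ≠ y := by
          rintro rfl
          have : s(r, z) ∈ q.reverse.edges := by simp [hq']
          exact hd.2 (by simpa using this)
        have := hS ⟨z, hrz.ne'⟩ (insertVertex_adj_self.mp hrz) ⟨y, hry.ne'⟩
          (insertVertex_adj_self.mp hry)
          (reachable_of_walk_insertVertex q' (Walk.cons_isPath_iff _ _ |>.mp hpath).2)
        exact hzy (congrArg Subtype.val this)
    · rw [← induce_insertVertex (G' := G') (S := S)] at hG'
      refine hG' (c.induce {r}ᶜ fun z hz =>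
        Set.mem_compl_singleton_iff.mpr (ne_of_mem_of_not_mem hz hr)) ?_
      exact Walk.IsCycle.of_map (f := (Embedding.induce {r}ᶜ).toHom) (by rwa [Walk.map_induce])

variable [DecidableEq V] {R : Finset V}

lemma IsRootedForest.of_insertVertex (hr : r ∈ R)
    (hG : (insertVertex r G' S).IsRootedForest R) :
    Disjoint S (R.subtype (· ∈ ({r}ᶜ : Set V))) ∧
      G'.IsRootedForest (R.subtype (· ∈ ({r}ᶜ : Set V)) ∪ S) := by
  obtain ⟨hac, hcover, hpair⟩ := hG
  obtain ⟨hac', hS⟩ := isAcyclic_insertVertex_iff.mp hac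
  have hrR : ∀ ρ ∈ R.subtype (· ∈ ({r}ᶜ : Set V)), ¬(insertVertex r G' S).Reachable r ρ :=
    fun ρ hρ h => ρ.2 (hpair r hr ρ (mem_subtype.mp hρ) h).symm
  refine ⟨Finset.disjoint_left.mpr fun s hs hsR =>
      hrR s hsR (insertVertex_adj_self.mpr hs).reachable,
    hac', fun v => ?_, fun a ha b hb hab => ?_⟩
  · obtain ⟨ρ, hρ, hρv⟩ := hcover v
    rcases eq_or_ne ρ r with rfl | hρr
    · obtain ⟨s, hs, hsv⟩ := reachable_insertVertex_self_iff.mp hρv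
      exact ⟨s, mem_union_right _ hs, hsv⟩
    · rcases reachable_insertVertex_iff (x := ⟨ρ, hρr⟩).mp hρv with h | ⟨h, -⟩
      · exact ⟨⟨ρ, hρr⟩, mem_union_left _ (mem_subtype.mpr hρ), h⟩
      · exact absurd h (hrR ⟨ρ, hρr⟩ (mem_subtype.mpr hρ))
  have hab' := reachable_insertVertex_of_reachable (S := S) hab
  rcases mem_union.mp ha with ha | ha <;> rcases mem_union.mp hb with hb | hb
  · exact Subtype.ext (hpair a (mem_subtype.mp ha) b (mem_subtype.mp hb) hab')
  · exact absurd ((insertVertex_adj_self.mpr hb).reachable.trans hab'.symm) (hrR a ha)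
  · exact absurd ((insertVertex_adj_self.mpr ha).reachable.trans hab') (hrR b hb)
  · exact hS a ha b hb hab

lemma isRootedForest_insertVertex (hr : r ∈ R)
    (hdisj : Disjoint S (R.subtype (· ∈ ({r}ᶜ : Set V))))
    (hG' : G'.IsRootedForest (R.subtype (· ∈ ({r}ᶜ : Set V)) ∪ S)) :
    (insertVertex r G' S).IsRootedForest R := by
  obtain ⟨hac', hcover', hpair'⟩ := hG'
  have hS : ∀ s ∈ S, ∀ t ∈ S, G'.Reachable s t → s = t := fun s hs t ht =>
    hpair' s (mem_union_right _ hs) t (mem_union_right _ ht)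
  have hrR : ∀ ρ ∈ R, ρ ≠ r → ¬(insertVertex r G' S).Reachable r ρ := by
    intro ρ hρ hρr h
    obtain ⟨s, hs, hsρ⟩ := reachable_insertVertex_self_iff (x := ⟨ρ, hρr⟩).mp h
    have hρR : ⟨ρ, hρr⟩ ∈ R.subtype (· ∈ ({r}ᶜ : Set V)) := mem_subtype.mpr hρ
    rw [hpair' s (mem_union_right _ hs) _ (mem_union_left _ hρR) hsρ] at hs
    exact Finset.disjoint_left.mp hdisj hs hρR
  refine ⟨isAcyclic_insertVertex_iff.mpr ⟨hac', hS⟩, fun v => ?_, fun a ha b hb hab => ?_⟩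
  · rcases eq_or_ne v r with rfl | hv
    · exact ⟨v, hr, .rfl⟩
    obtain ⟨ρ, hρ, hρv⟩ := hcover' ⟨v, hv⟩
    rcases mem_union.mp hρ with hρ | hρ
    · exact ⟨ρ, mem_subtype.mp hρ, reachable_insertVertex_of_reachable hρv⟩
    · exact ⟨r, hr, reachable_insertVertex_self_iff.mpr ⟨ρ, hρ, hρv⟩⟩
  by_cases hab' : a = b
  · exact hab'
  rcases eq_or_ne a r with rfl | har
  · exact absurd hab (hrR b hb (Ne.symm hab'))
  rcases eq_or_ne b r with rfl | hbr
  · exact absurd hab.symm (hrR a ha har)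
  rcases reachable_insertVertex_iff (x := ⟨a, har⟩) (y := ⟨b, hbr⟩).mp hab with h | ⟨h, -⟩
  · exact congrArg Subtype.val (hpair' _ (mem_union_left _ (mem_subtype.mpr ha)) _
      (mem_union_left _ (mem_subtype.mpr hb)) h)
  · exact absurd h (hrR a ha har)

open Classical in
noncomputable def rootedForestEquivSigma [Fintype V] (hr : r ∈ R) :
    {G : SimpleGraph V // G.IsRootedForest R} ≃
      Σ S : Finset ({r}ᶜ : Set V), {G' : SimpleGraph ({r}ᶜ : Set V) //
        Disjoint S (R.subtype (· ∈ ({r}ᶜ : Set V))) ∧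
          G'.IsRootedForest (R.subtype (· ∈ ({r}ᶜ : Set V)) ∪ S)} where
  toFun G := ⟨{s : ({r}ᶜ : Set V) | G.1.Adj r s}.toFinset, G.1.induce {r}ᶜ,
    IsRootedForest.of_insertVertex hr (by rw [insertVertex_induce (by simp)]; exact G.2)⟩
  invFun S := ⟨insertVertex r S.2.1 S.1, isRootedForest_insertVertex hr S.2.2.1 S.2.2.2⟩
  left_inv G := Subtype.ext (insertVertex_induce (by simp))
  right_inv S := Sigma.subtype_ext (by ext; simp) induce_insertVertex

lemma card_isRootedForest_eq_sum [Fintype V] (hr : r ∈ R) :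
    Nat.card {G : SimpleGraph V // G.IsRootedForest R} =
      ∑ S ∈ (R.subtype (· ∈ ({r}ᶜ : Set V)))ᶜ.powerset,
        Nat.card {G' : SimpleGraph ({r}ᶜ : Set V) //
          G'.IsRootedForest (R.subtype (· ∈ ({r}ᶜ : Set V)) ∪ S)} := by
  rw [Nat.card_congr (rootedForestEquivSigma hr), Nat.card_sigma]
  calc _ = ∑ S, if Disjoint S (R.subtype (· ∈ ({r}ᶜ : Set V))) then
          Nat.card {G' : SimpleGraph ({r}ᶜ : Set V) //
            G'.IsRootedForest (R.subtype (· ∈ ({r}ᶜ : Set V)) ∪ S)} else 0 :=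
        sum_congr rfl fun S _ => by split_ifs with h <;> simp [h]
    _ = _ := by
      rw [← sum_filter]
      congr
      ext S
      simp [subset_compl_iff_disjoint_right]

end insertVertex

lemma not_isRootedForest_empty [Nonempty V] (G : SimpleGraph V) : ¬G.IsRootedForest ∅ :=
  fun h => by simpa using h.2.1 (Classical.arbitrary V)

lemma isRootedForest_univ_iff [Fintype V] {G : SimpleGraph V} :
    G.IsRootedForest univ ↔ G = ⊥ := by
  refine ⟨fun h => ?_, ?_⟩
  · ext a b
    simpa using fun hab : G.Adj a b => hab.ne (h.2.2 a (mem_univ _) b (mem_univ _) hab.reachable)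
  · rintro rfl
    exact ⟨isAcyclic_bot, fun v => ⟨v, mem_univ _, .rfl⟩, fun a _ b _ h => reachable_bot.mp h⟩

theorem card_isRootedForest [Fintype V] [Nonempty V] (R : Finset V) :
    (Nat.card {G : SimpleGraph V // G.IsRootedForest R} : ℚ) =
      #R * (Fintype.card V : ℚ) ^ ((Fintype.card V : ℤ) - #R - 1) := by
  induction hN : Fintype.card V using Nat.strong_induction_on generalizing V with
  | _ N ih =>
  classical
  rcases R.eq_empty_or_nonempty with rfl | ⟨r, hr⟩
  · simp [not_isRootedForest_empty]
  by_cases hRu : R = univ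
  · subst hRu
    have : Nat.card {G : SimpleGraph V // G.IsRootedForest univ} = 1 := by
      simp [isRootedForest_univ_iff]
    rw [this, card_univ, hN, sub_self, zero_sub, zpow_neg_one, Nat.cast_one, mul_inv_cancel₀]
    exact Nat.cast_ne_zero.mpr (hN ▸ Fintype.card_ne_zero)
  set R' := R.subtype (· ∈ ({r}ᶜ : Set V))
  obtain ⟨v, hv⟩ : ∃ v, v ∉ R := by simpa [eq_univ_iff_forall] using hRu
  have hvr : v ≠ r := ne_of_mem_of_not_mem hr hv |>.symm
  have : Nonempty ({r}ᶜ : Set V) := ⟨⟨v, hvr⟩⟩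
  have hm : 0 < #R'ᶜ := card_pos.mpr ⟨⟨v, hvr⟩, by simpa [R'] using hv⟩
  have hcard' : Fintype.card ({r}ᶜ : Set V) = #R'ᶜ + #R' := (card_compl_add_card R').symm
  have hR : #R = #R' + 1 := (card_subtype_mem_compl_singleton_add_one hr).symm
  have hN' : N = #R'ᶜ + #R' + 1 := by
    have := Fintype.card_compl_set ({r} : Set V)
    simp only [Set.card_singleton, hN, hcard'] at this
    omega
  rw [card_isRootedForest_eq_sum hr, Nat.cast_sum]
  calc _ = ∑ S ∈ R'ᶜ.powerset, ((#R' : ℚ) + #S) * ((#R'ᶜ : ℚ) + #R') ^ ((#R'ᶜ : ℤ) - #S - 1) := by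
        refine sum_congr rfl fun S hS => ?_
        rw [ih _ (by omega) (R' ∪ S) hcard',
          card_union_of_disjoint (subset_compl_iff_disjoint_left.mp (mem_powerset.mp hS))]
        push_cast
        congr 2
        ring
    _ = _ := by
        rw [sum_powerset_add_card_mul_zpow _ _ (by positivity) (by positivity), hR, hN']
        push_cast
        congr 2
        ring

lemma isRootedForest_iff_card_connectedComponent [Finite V] {G : SimpleGraph V}
    {R : Finset V} :
    G.IsRootedForest R ↔ G.IsAcyclic ∧ Nat.card G.ConnectedComponent = #R ∧
      ∀ ρ ∈ R, ∀ σ ∈ R, G.Reachable ρ σ → ρ = σ := by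
  refine ⟨fun ⟨hac, hcover, hpair⟩ => ⟨hac, ?_, hpair⟩,
    fun ⟨hac, hcard, hpair⟩ => ⟨hac, ?_, hpair⟩⟩
  all_goals
    let f : R → G.ConnectedComponent := fun ρ => G.connectedComponentMk ρ
    have hf : Function.Injective f := fun a b h =>
      Subtype.ext (hpair a a.2 b b.2 (ConnectedComponent.eq.mp h))
  · have hsurj : Function.Surjective f := fun c => c.ind fun v => by
      obtain ⟨ρ, hρ, hρv⟩ := hcover v
      exact ⟨⟨ρ, hρ⟩, ConnectedComponent.eq.mpr hρv⟩
    rw [← Nat.card_eq_finsetCard]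
    exact (Nat.card_congr (Equiv.ofBijective f ⟨hf, hsurj⟩)).symm
  · intro v
    have hbij := (Nat.bijective_iff_injective_and_card f).mpr ⟨hf, by simp [hcard]⟩
    obtain ⟨ρ, hρ⟩ := hbij.2 (G.connectedComponentMk v)
    exact ⟨ρ, ρ.2, ConnectedComponent.eq.mp hρ⟩

end SimpleGraph

theorem stmt_5 (n i : ℕ) (hi : 1 ≤ i) (hin : i ≤ n) :
    ({G : SimpleGraph (Fin n) | G.IsAcyclic ∧
        Nat.card G.ConnectedComponent = i ∧
        (∀ a b : Fin n, (a : ℕ) < i → (b : ℕ) < i → G.Reachable a b → a = b)}.ncard : ℚ) =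
      (i : ℚ) * (n : ℚ) ^ ((n : ℤ) - (i : ℤ) - 1) := by
  let R : Finset (Fin n) := {v | (v : ℕ) < i}
  have hR : #R = i := by simp [R, Fin.card_filter_val_lt, hin]
  have : Nonempty (Fin n) := ⟨⟨0, by omega⟩⟩
  have hset : {G : SimpleGraph (Fin n) | G.IsAcyclic ∧ Nat.card G.ConnectedComponent = i ∧
      (∀ a b : Fin n, (a : ℕ) < i → (b : ℕ) < i → G.Reachable a b → a = b)} =
      {G | G.IsRootedForest R} := by
    ext G
    simp only [Set.mem_ofPred_eq, SimpleGraph.isRootedForest_iff_card_connectedComponent, hR, R,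
      mem_filter, mem_univ, true_and]
    grind
  have hcount := SimpleGraph.card_isRootedForest R
  rw [hR, Fintype.card_fin] at hcount
  rw [hset, ← Nat.card_coe_set_eq]
  exact hcount
end

section
/- The product ∏_{k=1}^{i}(1 - 1/(2k)) is at least (1/2)·sqrt(1/(2i)) for all positive integers i. -/
open Finset Real

/- Writing `P i` for the product, `P (i+1) = P i * (1 - 1/(2(i+1)))`, while the bound `√(1/(2i))`
shrinks by the factor `√(i/(i+1))`. Since `4i(i+1) ≤ (2i+1)²`, this factor is at most
`(2i+1)/(2i+2) = 1 - 1/(2(i+1))`, so the bound is propagated by induction from `i = 1`. -/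

lemma div_add_one_le_one_sub_one_div_two_mul_sq {x : ℝ} (hx : 0 ≤ x) :
    x / (x + 1) ≤ (1 - 1 / (2 * (x + 1))) ^ 2 := by
  have hx1 : 0 < x + 1 := by linarith
  rw [div_le_iff₀ hx1]
  field_simp
  nlinarith

lemma one_sub_one_div_two_mul_add_one_nonneg {x : ℝ} (hx : 0 ≤ x) :
    0 ≤ 1 - 1 / (2 * (x + 1)) := by
  rw [sub_nonneg, div_le_one (by linarith)]
  linarith

lemma sqrt_inv_two_mul_add_one_le {x : ℝ} (hx : 0 < x) :
    √(1 / (2 * (x + 1))) ≤ √(1 / (2 * x)) * (1 - 1 / (2 * (x + 1))) := by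
  have hfactor := one_sub_one_div_two_mul_add_one_nonneg hx.le
  have hsplit : 1 / (2 * (x + 1)) = 1 / (2 * x) * (x / (x + 1)) := by
    field_simp
  rw [← sqrt_sq hfactor, ← sqrt_mul (by positivity)]
  nth_rw 1 [hsplit]
  gcongr
  exact div_add_one_le_one_sub_one_div_two_mul_sq hx.le

lemma half_sqrt_inv_two_mul_le_prod {n : ℕ} (hn : 1 ≤ n) :
    (1 / 2 : ℝ) * √(1 / (2 * (n : ℝ))) ≤ ∏ k ∈ Icc 1 n, (1 - 1 / (2 * (k : ℝ))) := by
  induction n, hn using Nat.le_induction with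
  | base =>
    have : √(1 / (2 * 1) : ℝ) ≤ 1 := sqrt_le_one.mpr (by norm_num)
    simp only [Icc_self, prod_singleton, Nat.cast_one]
    linarith
  | succ n hn ih =>
    have hn0 : (0 : ℝ) < n := by exact_mod_cast hn
    have hfactor := one_sub_one_div_two_mul_add_one_nonneg hn0.le
    rw [prod_Icc_succ_top (by omega)]
    push_cast
    calc (1 / 2 : ℝ) * √(1 / (2 * ((n : ℝ) + 1)))
        ≤ (1 / 2) * √(1 / (2 * (n : ℝ))) * (1 - 1 / (2 * ((n : ℝ) + 1))) := by
          rw [mul_assoc]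
          gcongr
          exact sqrt_inv_two_mul_add_one_le hn0
      _ ≤ _ := by gcongr

theorem stmt_9_general (i : ℕ) :
    (1 / 2 : ℝ) * Real.sqrt (1 / (2 * (i : ℝ))) ≤
      ∏ k ∈ Finset.Icc 1 i, (1 - 1 / (2 * (k : ℝ))) := by
  rcases Nat.eq_zero_or_pos i with rfl | hi
  · -- `1 / 0 = 0` in `ℝ`, so the left side vanishes
    norm_num
  · exact half_sqrt_inv_two_mul_le_prod hi

theorem stmt_9 (i : ℕ) (hi : 1 ≤ i) :
    (1 / 2 : ℝ) * Real.sqrt (1 / (2 * (i : ℝ))) ≤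
      ∏ k ∈ Finset.Icc 1 i, (1 - 1 / (2 * (k : ℝ))) :=
  stmt_9_general i
end
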